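/- arXiv:2412.17684 — 3 statements merged into one kernel-verified Lean document; each statement's English description precedes it below -/
import Mathlib

section
/- Greedy maximization guarantee: if f : 2^V → ℝ is monotone nondecreasing, submodular, and f(∅) = 0, and S_k is the output of the greedy algorithm that iteratively adds the element with largest marginal gain for k steps, then f(S_k) ≥ (1 - (1 - 1/k)^k) · max_{|A| ≤ k} f(A) ≥ (1 - 1/e) · max_{|A| ≤ k} f(A). -/
open Finset

/-- Diminishing-returns submodularity for set functions on a finite ground set. -/
def Submodular {V : Type*} [DecidableEq V] (f : Finset V → ℝ) : Prop :=
  ∀ (A B : Finset V) (v : V), A ⊆ B → v ∉ B →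
    f (insert v B) - f B ≤ f (insert v A) - f A

lemma sum_marginal {V : Type*} [DecidableEq V] (f : Finset V → ℝ) (hsub : Submodular f)
    (A B : Finset V) : f (B ∪ A) - f B ≤ ∑ v ∈ A, (f (insert v B) - f B) := by
  induction A using Finset.induction_on with
  | empty => simp
  | insert a s ha ih =>
    rw [Finset.sum_insert ha, Finset.union_insert]
    by_cases haB : a ∈ B ∪ s
    · rw [Finset.insert_eq_self.mpr haB]
      have : a ∈ B := by
        rcases Finset.mem_union.mp haB with h | h
        · exact h
        · exact absurd h ha
      rw [Finset.insert_eq_self.mpr this]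
      linarith
    · have := hsub B (B ∪ s) a Finset.subset_union_left haB
      linarith

/-- Nemhauser–Wolsey–Fisher greedy guarantee: for a monotone nondecreasing, submodular,
normalized `f`, the greedy sequence `S` (adding a maximal-marginal-gain element at each
step) satisfies `f(S_k) ≥ (1 - (1 - 1/k)^k) · max_{|A| ≤ k} f(A) ≥ (1 - 1/e) · max f(A)`. -/
theorem greedy_guarantee {V : Type*} [Fintype V] [DecidableEq V]
    (f : Finset V → ℝ) (k : ℕ) (hk : 0 < k) (hkV : k ≤ Fintype.card V)
    (hmono : ∀ A B : Finset V, A ⊆ B → f A ≤ f B)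
    (hsub : Submodular f) (hf0 : f ∅ = 0)
    (S : ℕ → Finset V) (hS0 : S 0 = ∅)
    (hgreedy : ∀ t < k, ∃ v ∉ S t, S (t + 1) = insert v (S t) ∧
      ∀ u ∉ S t, f (insert u (S t)) ≤ f (insert v (S t))) :
    ∀ A : Finset V, A.card ≤ k →
      (1 - (1 - 1 / (k : ℝ)) ^ k) * f A ≤ f (S k) ∧
      (1 - (Real.exp 1)⁻¹) * f A ≤ f (S k) := by
  intro A hA
  have hfA : 0 ≤ f A := by
    have := hmono ∅ A (Finset.empty_subset A); linarith [hf0 ▸ this]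
  have hk' : (0:ℝ) < k := by exact_mod_cast hk
  have hnn : 0 ≤ 1 - 1/(k:ℝ) := by
    have h1 : 1/(k:ℝ) ≤ 1 := by
      rw [div_le_one hk']; exact_mod_cast hk
    linarith
  have hstep : ∀ t < k, f A - f (S (t+1)) ≤ (1 - 1/(k:ℝ)) * (f A - f (S t)) := by
    intro t ht
    obtain ⟨v, hv, hS, hmax⟩ := hgreedy t ht
    have hgain : 0 ≤ f (S (t+1)) - f (S t) := by
      rw [hS]
      have := hmono (S t) (insert v (S t)) (Finset.subset_insert v (S t))
      linarith
    have hsum := sum_marginal f hsub A (S t)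
    have hterm : ∀ u ∈ A, f (insert u (S t)) - f (S t) ≤ f (S (t+1)) - f (S t) := by
      intro u _
      by_cases hu' : u ∈ S t
      · rw [Finset.insert_eq_self.mpr hu']; linarith
      · rw [hS]; exact sub_le_sub_right (hmax u hu') _
    have h2 : ∑ u ∈ A, (f (insert u (S t)) - f (S t)) ≤
        (A.card : ℝ) * (f (S (t+1)) - f (S t)) := by
      calc ∑ u ∈ A, (f (insert u (S t)) - f (S t))
          ≤ ∑ _u ∈ A, (f (S (t+1)) - f (S t)) := Finset.sum_le_sum hterm
        _ = (A.card : ℝ) * (f (S (t+1)) - f (S t)) := by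
            rw [Finset.sum_const, nsmul_eq_mul]
    have h3 : (A.card : ℝ) * (f (S (t+1)) - f (S t)) ≤ (k:ℝ) * (f (S (t+1)) - f (S t)) :=
      mul_le_mul_of_nonneg_right (by exact_mod_cast hA) hgain
    have h4 : f A ≤ f (S t ∪ A) := hmono A _ Finset.subset_union_right
    have h5 : f A - f (S t) ≤ (k:ℝ) * (f (S (t+1)) - f (S t)) := by linarith
    have h6 : (1/(k:ℝ)) * (f A - f (S t)) ≤ f (S (t+1)) - f (S t) := by
      rw [div_mul_eq_mul_div, one_mul, div_le_iff₀ hk']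
      linarith [h5]
      -- fA - fSt ≤ gain * k
    have hEq : (1 - 1/(k:ℝ)) * (f A - f (S t))
        = (f A - f (S t)) - (1/(k:ℝ)) * (f A - f (S t)) := by ring
    rw [hEq]; linarith
  have hiter : ∀ t ≤ k, f A - f (S t) ≤ (1 - 1/(k:ℝ))^t * f A := by
    intro t
    induction t with
    | zero => intro _; simp [hS0, hf0]
    | succ n ih =>
      intro h
      have hn : n < k := lt_of_lt_of_le (Nat.lt_succ_self n) h
      have h1 := hstep n hn
      have h2 := ih (le_of_lt hn)
      calc f A - f (S (n+1)) ≤ (1 - 1/(k:ℝ)) * (f A - f (S n)) := h1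
        _ ≤ (1 - 1/(k:ℝ)) * ((1 - 1/(k:ℝ))^n * f A) := mul_le_mul_of_nonneg_left h2 hnn
        _ = (1 - 1/(k:ℝ))^(n+1) * f A := by ring
  have hmain := hiter k le_rfl
  have hp : (1 - 1/(k:ℝ))^k ≤ (Real.exp 1)⁻¹ := by
    have h1 : 1 - 1/(k:ℝ) ≤ Real.exp (-(1/(k:ℝ))) := by
      have := Real.add_one_le_exp (-(1/(k:ℝ))); linarith
    have h2 : (1 - 1/(k:ℝ))^k ≤ (Real.exp (-(1/(k:ℝ))))^k :=
      pow_le_pow_left₀ hnn h1 k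
    rw [← Real.exp_nat_mul] at h2
    have h3 : (k:ℝ) * (-(1/(k:ℝ))) = -1 := by field_simp
    rw [h3, Real.exp_neg] at h2
    exact h2
  constructor
  · nlinarith [hmain]
  · have : (1 - (Real.exp 1)⁻¹) * f A ≤ (1 - (1 - 1/(k:ℝ))^k) * f A :=
      mul_le_mul_of_nonneg_right (by linarith) hfA
    nlinarith [hmain]
end

section
/- Key inequality for greedy analysis: if f is monotone submodular with f(∅)=0, OPT is an optimal set of size k, and S is any set, then there exists v ∉ S with f(S∪{v}) - f(S) ≥ (f(OPT) - f(S))/k. -/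
/-!
Choose `v ∉ S` of largest marginal gain. By submodularity the gain of adding all of `OPT` to `S` is
at most the sum of the single-element gains over `OPT \ S`, each of which is at most that of `v`;
by monotonicity `f OPT - f S` is at most that total gain, hence at most `k` times the gain of `v`.
-/

open Finset

namespace Submodular

variable {V : Type*} [DecidableEq V] {f : Finset V → ℝ}

theorem sub_le_sum_marginal_of_disjoint (hsub : Submodular f) (S : Finset V) {T : Finset V}
    (hST : Disjoint S T) : f (S ∪ T) - f S ≤ ∑ v ∈ T, (f (insert v S) - f S) := by
  induction T using Finset.induction_on with
  | empty => simp
  | @insert a T haT ih =>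
    rw [disjoint_insert_right] at hST
    have hstep : f (insert a (S ∪ T)) - f (S ∪ T) ≤ f (insert a S) - f S :=
      hsub S (S ∪ T) a subset_union_left (by simp [hST.1, haT])
    rw [union_insert, sum_insert haT]
    linarith [ih hST.2]

theorem sub_le_sum_marginal (hsub : Submodular f) (S T : Finset V) :
    f (S ∪ T) - f S ≤ ∑ v ∈ T \ S, (f (insert v S) - f S) := by
  simpa only [union_sdiff_self_eq_union] using
    hsub.sub_le_sum_marginal_of_disjoint S disjoint_sdiff

theorem exists_sub_le_card_mul_marginal [Fintype V] (hmono : Monotone f) (hsub : Submodular f)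
    {S : Finset V} (hS : S ≠ univ) (T : Finset V) :
    ∃ v ∉ S, f T - f S ≤ #T * (f (insert v S) - f S) := by
  obtain ⟨u, hu⟩ : ∃ u, u ∉ S := by simpa [eq_univ_iff_forall] using hS
  obtain ⟨v, hvS, hvmax⟩ :=
    exists_max_image Sᶜ (fun w => f (insert w S) - f S) ⟨u, mem_compl.2 hu⟩
  have hgain : 0 ≤ f (insert v S) - f S := sub_nonneg.2 (hmono (subset_insert v S))
  refine ⟨v, mem_compl.1 hvS, ?_⟩
  calc f T - f S ≤ f (S ∪ T) - f S := by gcongr; exact hmono subset_union_right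
    _ ≤ ∑ w ∈ T \ S, (f (insert w S) - f S) := hsub.sub_le_sum_marginal S T
    _ ≤ ∑ _w ∈ T \ S, (f (insert v S) - f S) :=
        sum_le_sum fun w hw => hvmax w (mem_compl.2 (mem_sdiff.1 hw).2)
    _ = #(T \ S) * (f (insert v S) - f S) := by rw [sum_const, nsmul_eq_mul]
    _ ≤ #T * (f (insert v S) - f S) := by gcongr; exact sdiff_subset

end Submodular

theorem greedy_key_inequality_general {V : Type*} [Fintype V] [DecidableEq V]
    (f : Finset V → ℝ) (hmono : ∀ A B : Finset V, A ⊆ B → f A ≤ f B)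
    (hsub : Submodular f)
    (k : ℕ) (OPT : Finset V) (hOPTcard : OPT.card = k)
    (S : Finset V) (hS : S ≠ Finset.univ) :
    ∃ v ∉ S, (f OPT - f S) / (k : ℝ) ≤ f (insert v S) - f S := by
  have hmono' : Monotone f := fun A B h => hmono A B h
  obtain ⟨v, hvS, hv⟩ := hsub.exists_sub_le_card_mul_marginal hmono' hS OPT
  refine ⟨v, hvS, div_le_of_le_mul₀ k.cast_nonneg ?_ ?_⟩
  · exact sub_nonneg.2 (hmono' (subset_insert v S))
  · simpa only [hOPTcard, mul_comm] using hv

/-- Key inequality for the greedy analysis: if `f` is monotone submodular with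
`f(∅) = 0`, and `OPT` is an optimal set of size `k`, then for any (proper) set `S`
there exists `v ∉ S` with `f(S ∪ {v}) - f(S) ≥ (f(OPT) - f(S)) / k`. -/
theorem greedy_key_inequality {V : Type*} [Fintype V] [DecidableEq V]
    (f : Finset V → ℝ) (hmono : ∀ A B : Finset V, A ⊆ B → f A ≤ f B)
    (hsub : Submodular f) (hf0 : f ∅ = 0)
    (k : ℕ) (hk : 0 < k) (OPT : Finset V) (hOPTcard : OPT.card = k)
    (hOPT : ∀ A : Finset V, A.card ≤ k → f A ≤ f OPT)
    (S : Finset V) (hS : S ≠ Finset.univ) :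
    ∃ v ∉ S, (f OPT - f S) / (k : ℝ) ≤ f (insert v S) - f S :=
  greedy_key_inequality_general f hmono hsub k OPT hOPTcard S hS
end

section
/- The log-determinant set function f(A) = log det W[A,A] for a symmetric positive definite matrix W is submodular: for A ⊆ B ⊆ [n] and v ∉ B, log det W[A∪{v},A∪{v}] - log det W[A,A] ≥ log det W[B∪{v},B∪{v}] - log det W[B,B]. -/
open Finset Matrix

/-- The principal submatrix of `W` indexed by `A`. -/
def subMat {n : ℕ} (W : Matrix (Fin n) (Fin n) ℝ) (A B : Finset (Fin n)) :
    Matrix A B ℝ :=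
  Matrix.of fun i j => W i.1 j.1

/-- The log-determinant set function `f(A) = log det W[A,A]` (with `f(∅) = 0`). -/
noncomputable def logDetSet {n : ℕ} (W : Matrix (Fin n) (Fin n) ℝ)
    (A : Finset (Fin n)) : ℝ :=
  Real.log (subMat W A A).det

section Aux

variable {n : ℕ}

lemma sum_restrict {A B : Finset (Fin n)} (h : A ⊆ B) (g : Fin n → ℝ)
    (hg : ∀ x, x ∉ A → g x = 0) :
    ∑ j : B, g j = ∑ j : A, g j := by
  rw [Finset.sum_coe_sort B g, Finset.sum_coe_sort A g]
  exact (Finset.sum_subset h (fun x _ hx => hg x hx)).symm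

lemma sum_restrict' (A : Finset (Fin n)) (g : Fin n → ℝ)
    (hg : ∀ x, x ∉ A → g x = 0) :
    ∑ j, g j = ∑ j : A, g j := by
  rw [Finset.sum_coe_sort A g]
  exact (Finset.sum_subset (Finset.subset_univ A) (fun x _ hx => hg x hx)).symm

lemma wsymm {W : Matrix (Fin n) (Fin n) ℝ} (hW : W.PosDef) (i j : Fin n) :
    W i j = W j i := by
  have := congrFun (congrFun hW.1 i) j
  simpa [Matrix.conjTranspose_apply] using this.symm

lemma subMat_posDef {W : Matrix (Fin n) (Fin n) ℝ} (hW : W.PosDef)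
    (A : Finset (Fin n)) : (subMat W A A).PosDef := by
  refine Matrix.PosDef.of_dotProduct_mulVec_pos ?_ ?_
  · ext i j
    simp [subMat, Matrix.conjTranspose_apply, wsymm hW]
  · intro x hx
    set X : Fin n → ℝ := fun i => if h : i ∈ A then x ⟨i, h⟩ else 0 with hX
    have hX0 : ∀ i, i ∉ A → X i = 0 := fun i hi => dif_neg hi
    have hXne : X ≠ 0 := by
      intro h0
      apply hx
      funext i
      have := congrFun h0 i.1
      simpa [hX, i.2] using this
    have key : star x ⬝ᵥ (subMat W A A *ᵥ x) = star X ⬝ᵥ (W *ᵥ X) := by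
      simp only [star_trivial, dotProduct, Matrix.mulVec, dotProduct]
      rw [sum_restrict' A (fun i => X i * ∑ j, W i j * X j)
        (fun i hi => by rw [hX0 i hi, zero_mul])]
      refine Finset.sum_congr rfl (fun i _ => ?_)
      have h1 : X i.1 = x i := dif_pos i.2
      rw [h1]
      congr 1
      rw [sum_restrict' A (fun j => W i.1 j * X j)
        (fun j hj => by rw [hX0 j hj, mul_zero])]
      refine Finset.sum_congr rfl (fun j _ => ?_)
      have h2 : X j.1 = x j := dif_pos j.2
      rw [h2]; rfl
    rw [key]
    exact hW.dotProduct_mulVec_pos hXne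

lemma var_ineq {m : Type*} [Fintype m] [DecidableEq m] {N : Matrix m m ℝ}
    (hN : N.PosDef) (c y : m → ℝ) :
    2 * (y ⬝ᵥ c) - y ⬝ᵥ (N *ᵥ y) ≤ c ⬝ᵥ (N⁻¹ *ᵥ c) := by
  have hdet : IsUnit N.det := isUnit_iff_ne_zero.mpr hN.det_pos.ne'
  set w : m → ℝ := N⁻¹ *ᵥ c with hw
  have hNw : N *ᵥ w = c := by
    rw [hw, Matrix.mulVec_mulVec, Matrix.mul_nonsing_inv _ hdet, Matrix.one_mulVec]
  have hNT : Nᵀ = N := by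
    have := hN.1
    simpa [Matrix.IsHermitian, Matrix.conjTranspose_eq_transpose_of_trivial] using this
  have hswap : ∀ a b : m → ℝ, a ⬝ᵥ (N *ᵥ b) = (N *ᵥ a) ⬝ᵥ b := by
    intro a b
    rw [Matrix.dotProduct_mulVec, ← Matrix.mulVec_transpose, hNT]
  have h0 : 0 ≤ (y - w) ⬝ᵥ (N *ᵥ (y - w)) := by
    simpa [star_trivial] using hN.posSemidef.dotProduct_mulVec_nonneg (y - w)
  have hexp : (y - w) ⬝ᵥ (N *ᵥ (y - w)) =
      y ⬝ᵥ (N *ᵥ y) - y ⬝ᵥ c - (y ⬝ᵥ c) + w ⬝ᵥ c := by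
    have e1 : w ⬝ᵥ (N *ᵥ y) = y ⬝ᵥ c := by
      rw [hswap, hNw, dotProduct_comm]
    have e2 : y ⬝ᵥ (N *ᵥ w) = y ⬝ᵥ c := by rw [hNw]
    have e3 : w ⬝ᵥ (N *ᵥ w) = w ⬝ᵥ c := by rw [hNw]
    rw [Matrix.mulVec_sub, sub_dotProduct, dotProduct_sub,
      dotProduct_sub, e1, e2, e3]
    ring
  have hcw : c ⬝ᵥ (N⁻¹ *ᵥ c) = w ⬝ᵥ c := by
    rw [hw, dotProduct_comm]
  rw [hcw]
  rw [hexp] at h0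
  linarith

/-- The Schur-complement scalar for adding `v` to `A`. -/
noncomputable def qval {n : ℕ} (W : Matrix (Fin n) (Fin n) ℝ) (A : Finset (Fin n))
    (v : Fin n) : ℝ :=
  (fun i : A => W v i.1) ⬝ᵥ ((subMat W A A)⁻¹ *ᵥ (fun i : A => W v i.1))

lemma q_mono {W : Matrix (Fin n) (Fin n) ℝ} (hW : W.PosDef) {A B : Finset (Fin n)}
    (hAB : A ⊆ B) (v : Fin n) : qval W A v ≤ qval W B v := by
  classical
  set M := subMat W A A with hM
  set N := subMat W B B with hN
  have hMpd := subMat_posDef hW A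
  have hNpd := subMat_posDef hW B
  set cA : A → ℝ := fun i => W v i.1 with hcA
  set cB : B → ℝ := fun i => W v i.1 with hcB
  set yA : A → ℝ := M⁻¹ *ᵥ cA with hyA
  set Y : Fin n → ℝ := fun i => if h : i ∈ A then yA ⟨i, h⟩ else 0 with hY
  have hY0 : ∀ i, i ∉ A → Y i = 0 := fun i hi => dif_neg hi
  have hYA : ∀ i : A, Y i.1 = yA i := fun i => dif_pos i.2
  set yB : B → ℝ := fun j => Y j.1 with hyB
  have hdetM : IsUnit M.det := isUnit_iff_ne_zero.mpr hMpd.det_pos.ne'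
  have hMyA : M *ᵥ yA = cA := by
    rw [hyA, Matrix.mulVec_mulVec, Matrix.mul_nonsing_inv _ hdetM, Matrix.one_mulVec]
  have claim1 : yB ⬝ᵥ cB = yA ⬝ᵥ cA := by
    have h1 : ∑ j : B, (fun t => Y t * W v t) j.1 = ∑ j : A, (fun t => Y t * W v t) j.1 :=
      sum_restrict hAB (fun t => Y t * W v t)
        (fun t ht => by rw [hY0 t ht, zero_mul])
    calc yB ⬝ᵥ cB = ∑ j : B, (fun t => Y t * W v t) j.1 := rfl
      _ = ∑ j : A, (fun t => Y t * W v t) j.1 := h1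
      _ = yA ⬝ᵥ cA := Finset.sum_congr rfl (fun j _ => by dsimp only; rw [hYA j])
  have inner_eq : ∀ i : Fin n,
      (∑ k : B, W i k.1 * Y k.1) = ∑ k : A, W i k.1 * Y k.1 := by
    intro i
    rw [show ∑ k : B, W i k.1 * Y k.1 = ∑ k : B, (fun t => W i t * Y t) k.1 from rfl,
      show ∑ k : A, W i k.1 * Y k.1 = ∑ k : A, (fun t => W i t * Y t) k.1 from rfl]
    exact sum_restrict hAB (fun t => W i t * Y t)
      (fun t ht => by rw [hY0 t ht, mul_zero])
  have claim2 : yB ⬝ᵥ (N *ᵥ yB) = yA ⬝ᵥ (M *ᵥ yA) := by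
    simp only [dotProduct, Matrix.mulVec]
    have lhs_eq : ∀ j : B, (fun k : B => N j k) ⬝ᵥ yB = ∑ k : A, W j.1 k.1 * Y k.1 := by
      intro j
      simp only [dotProduct]
      rw [← inner_eq j.1]
      rfl
    have rhs_eq : ∀ j : A, (fun k : A => M j k) ⬝ᵥ yA = ∑ k : A, W j.1 k.1 * Y k.1 := by
      intro j
      simp only [dotProduct]
      refine Finset.sum_congr rfl (fun k _ => ?_)
      rw [hYA k]; rfl
    calc ∑ j : B, yB j * (fun k : B => N j k) ⬝ᵥ yB
        = ∑ j : B, (fun t : Fin n => Y t * ∑ k : A, W t k.1 * Y k.1) j.1 := by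
          refine Finset.sum_congr rfl (fun j _ => ?_)
          dsimp only
          rw [lhs_eq j]
      _ = ∑ j : A, (fun t : Fin n => Y t * ∑ k : A, W t k.1 * Y k.1) j.1 :=
          sum_restrict hAB (fun t : Fin n => Y t * ∑ k : A, W t k.1 * Y k.1)
            (fun t ht => by rw [hY0 t ht, zero_mul])
      _ = ∑ j : A, yA j * (fun k : A => M j k) ⬝ᵥ yA := by
          refine Finset.sum_congr rfl (fun j _ => ?_)
          dsimp only
          rw [rhs_eq j, hYA j]
  have hqA : qval W A v = yA ⬝ᵥ cA := by
    rw [qval, ← hcA, ← hM, ← hyA, dotProduct_comm]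
  have hyMy : yA ⬝ᵥ (M *ᵥ yA) = yA ⬝ᵥ cA := by rw [hMyA]
  have := var_ineq hNpd cB yB
  rw [claim1, claim2, hyMy] at this
  rw [hqA]
  calc yA ⬝ᵥ cA = 2 * (yA ⬝ᵥ cA) - yA ⬝ᵥ cA := by ring
    _ ≤ cB ⬝ᵥ (N⁻¹ *ᵥ cB) := this
    _ = qval W B v := rfl

lemma det_insert {W : Matrix (Fin n) (Fin n) ℝ} (hW : W.PosDef)
    (A : Finset (Fin n)) (v : Fin n) (hv : v ∉ A) :
    (subMat W (insert v A) (insert v A)).det =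
      (subMat W A A).det * (W v v - qval W A v) := by
  classical
  set M := subMat W A A with hM
  have hMpd := subMat_posDef hW A
  haveI : Invertible M := M.invertibleOfIsUnitDet (isUnit_iff_ne_zero.mpr hMpd.det_pos.ne')
  set Bc : Matrix A Unit ℝ := Matrix.of (fun i _ => W i.1 v) with hBc
  set Cr : Matrix Unit A ℝ := Matrix.of (fun _ j => W v j.1) with hCr
  set D : Matrix Unit Unit ℝ := Matrix.of (fun _ _ => W v v) with hD
  set e : { x // x ∈ insert v A } ≃ (A ⊕ Unit) :=
    (Finset.subtypeInsertEquivOption hv).trans (Equiv.optionEquivSumPUnit _) with he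
  have hsub : subMat W (insert v A) (insert v A) =
      (Matrix.fromBlocks M Bc Cr D).submatrix e e := by
    ext i j
    simp only [Matrix.submatrix_apply, he, Equiv.trans_apply,
      Finset.subtypeInsertEquivOption, Equiv.coe_fn_mk]
    by_cases hi : (i : Fin n) = v <;> by_cases hj : (j : Fin n) = v <;>
      simp [hi, hj, Matrix.fromBlocks, subMat, hM, hBc, hCr, hD]
  rw [hsub, Matrix.det_submatrix_equiv_self, Matrix.det_fromBlocks₁₁]
  congr 1
  rw [Matrix.det_unique]
  have hinv : (⅟M : Matrix A A ℝ) = M⁻¹ := Matrix.invOf_eq_nonsing_inv M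
  rw [hinv]
  simp only [Matrix.sub_apply, Matrix.mul_apply, hD, hCr, hBc, Matrix.of_apply]
  congr 1
  rw [qval, ← hM]
  simp only [dotProduct, Matrix.mulVec, dotProduct, Finset.mul_sum]
  rw [Finset.sum_comm]
  refine Finset.sum_congr rfl (fun j _ => ?_)
  rw [Finset.sum_mul]
  refine Finset.sum_congr rfl (fun i _ => ?_)
  rw [wsymm hW j.1 v]
  ring

end Aux

/-- The log-determinant set function of a symmetric positive definite matrix is
submodular. -/
theorem logdet_submodular {n : ℕ} (W : Matrix (Fin n) (Fin n) ℝ) (hW : W.PosDef) :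
    ∀ (A B : Finset (Fin n)) (v : Fin n), A ⊆ B → v ∉ B →
      logDetSet W (insert v B) - logDetSet W B ≤
        logDetSet W (insert v A) - logDetSet W A := by
  intro A B v hAB hvB
  have hvA : v ∉ A := fun h => hvB (hAB h)
  have hdA := (subMat_posDef hW A).det_pos
  have hdB := (subMat_posDef hW B).det_pos
  have hdA' := (subMat_posDef hW (insert v A)).det_pos
  have hdB' := (subMat_posDef hW (insert v B)).det_pos
  have hsA : 0 < W v v - qval W A v := by
    have := det_insert hW A v hvA
    nlinarith
  have hsB : 0 < W v v - qval W B v := by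
    have := det_insert hW B v hvB
    nlinarith
  have hdiff : ∀ (C : Finset (Fin n)), v ∉ C → 0 < (subMat W C C).det →
      0 < W v v - qval W C v →
      logDetSet W (insert v C) - logDetSet W C = Real.log (W v v - qval W C v) := by
    intro C hvC hdC hsC
    rw [logDetSet, logDetSet, det_insert hW C v hvC,
      Real.log_mul hdC.ne' hsC.ne']
    ring
  rw [hdiff A hvA hdA hsA, hdiff B hvB hdB hsB]
  exact Real.log_le_log hsB (by linarith [q_mono hW hAB v])
end
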